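/- Let A be a Leibniz algebra. Then Asoc(A) ⊆ Nil(A) ⊆ Z_A(Soc(A)). -/
import Mathlib


namespace Leib

variable {K : Type*} [Field K] {A : Type*} [AddCommGroup A] [Module K A]

variable (mul : A →ₗ[K] A →ₗ[K] A)

/-- The (left) Leibniz identity: left multiplication is a derivation. -/
def IsLeibniz : Prop :=
  ∀ x y z : A, mul x (mul y z) = mul (mul x y) z + mul y (mul x z)

/-- The product of two submodules: the span of all products. -/
def prodSM (B C : Submodule K A) : Submodule K A :=
  Submodule.span K {z | ∃ b ∈ B, ∃ c ∈ C, z = mul b c}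

/-- A subalgebra: a submodule closed under multiplication. -/
def IsSubalg (S : Submodule K A) : Prop :=
  ∀ x ∈ S, ∀ y ∈ S, mul x y ∈ S

/-- A (two-sided) ideal. -/
def IsIdeal (B : Submodule K A) : Prop :=
  ∀ a : A, ∀ b ∈ B, mul a b ∈ B ∧ mul b a ∈ B

/-- An abelian subspace: all products vanish. -/
def IsAbelian (B : Submodule K A) : Prop :=
  ∀ x ∈ B, ∀ y ∈ B, mul x y = 0

/-- A minimal ideal. -/
def IsMinIdeal (B : Submodule K A) : Prop :=
  IsIdeal mul B ∧ B ≠ ⊥ ∧ ∀ C : Submodule K A, IsIdeal mul C → C ≤ B → C = ⊥ ∨ C = B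

/-- Lower central series of a subalgebra `B`: `B, B·B, B·(B·B), ...`. -/
def lcsOf (B : Submodule K A) : ℕ → Submodule K A
  | 0 => B
  | n + 1 => prodSM mul B (lcsOf B n)

/-- A nilpotent subalgebra. -/
def IsNilpotentSubalg (B : Submodule K A) : Prop := ∃ n, lcsOf mul B n = ⊥

/-- A nilpotent algebra. -/
def IsNilpotentAlg : Prop := ∃ n, lcsOf mul ⊤ n = ⊥

/-- Derived series of a subalgebra. -/
def derOf (B : Submodule K A) : ℕ → Submodule K A
  | 0 => B
  | n + 1 => prodSM mul (derOf B n) (derOf B n)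

/-- A solvable subalgebra. -/
def IsSolvableSubalg (B : Submodule K A) : Prop := ∃ n, derOf mul B n = ⊥

/-- A solvable algebra. -/
def IsSolvableAlg : Prop := ∃ n, derOf mul ⊤ n = ⊥

/-- A semisimple algebra: no nonzero solvable ideal. -/
def IsSemisimpleAlg : Prop :=
  ∀ B : Submodule K A, IsIdeal mul B → IsSolvableSubalg mul B → B = ⊥

/-- The nilradical: the largest nilpotent ideal (here: the sup of all nilpotent ideals). -/
def nilrad : Submodule K A :=
  sSup {B : Submodule K A | IsIdeal mul B ∧ IsNilpotentSubalg mul B}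

/-- The socle: the sum of all minimal ideals. -/
def socle : Submodule K A := sSup {B : Submodule K A | IsMinIdeal mul B}

/-- The abelian socle: the sum of all abelian minimal ideals. -/
def asocle : Submodule K A :=
  sSup {B : Submodule K A | IsMinIdeal mul B ∧ IsAbelian mul B}

/-- The centralizer of a subspace `W`: elements annihilating `W` on both sides. -/
def centralizer (W : Submodule K A) : Submodule K A where
  carrier := {x | ∀ w ∈ W, mul x w = 0 ∧ mul w x = 0}
  add_mem' := by
    intro a b ha hb w hw
    constructor
    · simp [map_add, (ha w hw).1, (hb w hw).1]
    · simp [map_add, (ha w hw).2, (hb w hw).2]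
  zero_mem' := by intro w hw; simp
  smul_mem' := by
    intro c a ha w hw
    constructor
    · simp [map_smul, (ha w hw).1]
    · simp [map_smul, (ha w hw).2]

/-- The center of the algebra. -/
def center : Submodule K A := centralizer mul ⊤

/-- A maximal (proper) subalgebra of a subalgebra `M`. -/
def IsMaxSubalgIn (M S : Submodule K A) : Prop :=
  S ≤ M ∧ IsSubalg mul S ∧ S ≠ M ∧
    ∀ T : Submodule K A, T ≤ M → IsSubalg mul T → S ≤ T → T = S ∨ T = M

/-- The Frattini subalgebra of `M`: the intersection of its maximal subalgebras
(equal to `M` if there are none). -/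
def frattiniSubalgIn (M : Submodule K A) : Submodule K A :=
  M ⊓ sInf {S : Submodule K A | IsMaxSubalgIn mul M S}

/-- An ideal of the subalgebra `M`. -/
def IsIdealIn (M C : Submodule K A) : Prop :=
  C ≤ M ∧ ∀ x ∈ M, ∀ c ∈ C, mul x c ∈ C ∧ mul c x ∈ C

/-- The Frattini ideal of `M`: the largest ideal of `M` contained in its
Frattini subalgebra. -/
def frattiniIdealIn (M : Submodule K A) : Submodule K A :=
  sSup {C : Submodule K A | IsIdealIn mul M C ∧ C ≤ frattiniSubalgIn mul M}

/-- The Frattini subalgebra of the algebra. -/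
def frattiniSubalg : Submodule K A := frattiniSubalgIn mul ⊤

/-- The Frattini ideal of the algebra. -/
def frattiniIdeal : Submodule K A := frattiniIdealIn mul ⊤

/-- An elementary algebra: every subalgebra has zero Frattini ideal. -/
def IsElementary : Prop :=
  ∀ M : Submodule K A, IsSubalg mul M → frattiniIdealIn mul M = ⊥

/-- The derived subalgebra `A² = A·A`. -/
def derivedSubalg : Submodule K A := prodSM mul ⊤ ⊤

/-- A Cartan subalgebra: a nilpotent, self-normalizing subalgebra. -/
def IsCartan (H : Submodule K A) : Prop :=
  IsSubalg mul H ∧ IsNilpotentSubalg mul H ∧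
    ∀ x : A, (∀ h ∈ H, mul x h ∈ H ∧ mul h x ∈ H) → x ∈ H

end Leib

open Leib

variable {K : Type*} [Field K] {A : Type*} [AddCommGroup A] [Module K A]
variable (mul : A →ₗ[K] A →ₗ[K] A)

lemma mem_prodSM {B C : Submodule K A} {b c : A} (hb : b ∈ B) (hc : c ∈ C) :
    mul b c ∈ prodSM mul B C :=
  Submodule.subset_span ⟨b, hb, c, hc, rfl⟩

lemma prodSM_le {B C T : Submodule K A} (h : ∀ b ∈ B, ∀ c ∈ C, mul b c ∈ T) :
    prodSM mul B C ≤ T := by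
  apply Submodule.span_le.2
  rintro z ⟨b, hb, c, hc, rfl⟩
  exact h b hb c hc

lemma prodSM_mono {B B' C C' : Submodule K A} (hB : B ≤ B') (hC : C ≤ C') :
    prodSM mul B C ≤ prodSM mul B' C' :=
  prodSM_le mul fun b hb c hc => mem_prodSM mul (hB hb) (hC hc)

lemma lcsOf_succ (B : Submodule K A) (n : ℕ) :
    lcsOf mul B (n + 1) = prodSM mul B (lcsOf mul B n) := rfl

lemma lcs_prod (hleib : IsLeibniz mul) (N : Submodule K A) :
    ∀ a b, prodSM mul (lcsOf mul N a) (lcsOf mul N b) ≤ lcsOf mul N (a + b + 1) := by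
  intro a
  induction a with
  | zero =>
      intro b
      rw [show (0 : ℕ) + b + 1 = b + 1 by omega, lcsOf_succ]
      exact le_rfl
  | succ a ih =>
      intro b
      apply prodSM_le
      intro u hu c hc
      have hcom : lcsOf mul N (a + 1) ≤
          Submodule.comap (mul.flip c) (lcsOf mul N (a + 1 + b + 1)) := by
        rw [lcsOf_succ]
        apply prodSM_le
        intro x hx y hy
        simp only [Submodule.mem_comap, LinearMap.flip_apply]
        have key : mul (mul x y) c = mul x (mul y c) - mul y (mul x c) :=
          eq_sub_of_add_eq (hleib x y c).symm
        rw [key, show a + 1 + b + 1 = a + b + 1 + 1 by omega, lcsOf_succ]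
        have h1 : mul y c ∈ lcsOf mul N (a + b + 1) := ih b (mem_prodSM mul hy hc)
        have h2 : mul x (mul y c) ∈ prodSM mul N (lcsOf mul N (a + b + 1)) :=
          mem_prodSM mul hx h1
        have h3 : mul x c ∈ lcsOf mul N (b + 1) := by
          rw [lcsOf_succ]; exact mem_prodSM mul hx hc
        have h4 : mul y (mul x c) ∈ lcsOf mul N (a + (b + 1) + 1) :=
          ih (b + 1) (mem_prodSM mul hy h3)
        rw [show a + (b + 1) + 1 = a + b + 1 + 1 by omega, lcsOf_succ] at h4
        exact sub_mem h2 h4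
      have := hcom hu
      simpa using this

/-- A nilpotent ideal centralizes every minimal ideal. -/
lemma nil_centralizes_min (hleib : IsLeibniz mul) {N B : Submodule K A}
    (hNi : IsIdeal mul N) (hNn : IsNilpotentSubalg mul N) (hB : IsMinIdeal mul B) :
    ∀ n ∈ N, ∀ b ∈ B, mul n b = 0 ∧ mul b n = 0 := by
  obtain ⟨hBi, hBne, hBmin⟩ := hB
  have hInf : IsIdeal mul (B ⊓ N) := fun a b hb =>
    ⟨⟨(hBi a b hb.1).1, (hNi a b hb.2).1⟩, (hBi a b hb.1).2, (hNi a b hb.2).2⟩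
  rcases hBmin _ hInf inf_le_left with h0 | hBeq
  · intro n hn b hb
    have h1 : mul n b ∈ B ⊓ N := ⟨(hBi n b hb).1, (hNi b n hn).2⟩
    have h2 : mul b n ∈ B ⊓ N := ⟨(hBi n b hb).2, (hNi b n hn).1⟩
    rw [h0, Submodule.mem_bot] at h1 h2
    exact ⟨h1, h2⟩
  · have hBN : B ≤ N := inf_eq_left.mp hBeq
    set D : Submodule K A := prodSM mul N B ⊔ prodSM mul B N with hD
    have hNB_le : prodSM mul N B ≤ D := le_sup_left
    have hBN_le : prodSM mul B N ≤ D := le_sup_right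
    have hD_le_B : D ≤ B :=
      sup_le (prodSM_le mul fun n hn b hb => (hBi n b hb).1)
        (prodSM_le mul fun b hb n hn => (hBi n b hb).2)
    have hDi : IsIdeal mul D := by
      intro a d hd
      constructor
      · have : D ≤ Submodule.comap (mul a) D := by
          apply sup_le
          · apply prodSM_le
            intro n hn b hb
            simp only [Submodule.mem_comap]
            rw [hleib a n b]
            exact add_mem (hNB_le (mem_prodSM mul (hNi a n hn).1 hb))
              (hNB_le (mem_prodSM mul hn (hBi a b hb).1))
          · apply prodSM_le
            intro b hb n hn
            simp only [Submodule.mem_comap]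
            rw [hleib a b n]
            exact add_mem (hBN_le (mem_prodSM mul (hBi a b hb).1 hn))
              (hBN_le (mem_prodSM mul hb (hNi a n hn).1))
        exact this hd
      · have : D ≤ Submodule.comap (mul.flip a) D := by
          apply sup_le
          · apply prodSM_le
            intro n hn b hb
            simp only [Submodule.mem_comap, LinearMap.flip_apply]
            rw [eq_sub_of_add_eq (hleib n b a).symm]
            exact sub_mem (hNB_le (mem_prodSM mul hn (hBi a b hb).2))
              (hBN_le (mem_prodSM mul hb (hNi a n hn).2))
          · apply prodSM_le
            intro b hb n hn
            simp only [Submodule.mem_comap, LinearMap.flip_apply]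
            rw [eq_sub_of_add_eq (hleib b n a).symm]
            exact sub_mem (hBN_le (mem_prodSM mul hb (hNi a n hn).2))
              (hNB_le (mem_prodSM mul hn (hBi a b hb).2))
        have := this hd
        simpa using this
    rcases hBmin D hDi hD_le_B with hD0 | hDB
    · intro n hn b hb
      have h1 : mul n b ∈ D := hNB_le (mem_prodSM mul hn hb)
      have h2 : mul b n ∈ D := hBN_le (mem_prodSM mul hb hn)
      rw [hD0, Submodule.mem_bot] at h1 h2
      exact ⟨h1, h2⟩
    · exfalso
      have hk : ∀ k, B ≤ lcsOf mul N k := by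
        intro k
        induction k with
        | zero => exact hBN
        | succ k ih =>
            calc B = D := hDB.symm
              _ ≤ prodSM mul N (lcsOf mul N k) ⊔
                    prodSM mul (lcsOf mul N k) (lcsOf mul N 0) :=
                sup_le_sup (prodSM_mono mul le_rfl ih) (prodSM_mono mul ih (le_refl N))
              _ ≤ lcsOf mul N (k + 1) := by
                apply sup_le
                · rw [lcsOf_succ]
                · have := lcs_prod mul hleib N k 0
                  rwa [show k + 0 + 1 = k + 1 by omega] at this
      obtain ⟨m, hm⟩ := hNn
      exact hBne (le_bot_iff.mp (hm ▸ hk m))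

/-- `Asoc(A) ⊆ Nil(A) ⊆ Z_A(Soc(A))` for a Leibniz algebra `A`. -/
theorem stmt4 (hleib : IsLeibniz mul) :
    asocle mul ≤ nilrad mul ∧ nilrad mul ≤ centralizer mul (socle mul) := by
  constructor
  · apply sSup_le
    rintro B ⟨hBmin, hBab⟩
    apply le_sSup
    refine ⟨hBmin.1, 1, le_bot_iff.mp ?_⟩
    rw [lcsOf_succ]
    apply prodSM_le
    intro x hx y hy
    rw [hBab x hx y hy]
    exact Submodule.zero_mem ⊥
  · apply sSup_le
    rintro N ⟨hNi, hNn⟩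
    intro n hn
    show ∀ w ∈ socle mul, mul n w = 0 ∧ mul w n = 0
    intro w hw
    have hsoc : socle mul ≤
        Submodule.comap (mul n) ⊥ ⊓ Submodule.comap (mul.flip n) ⊥ := by
      apply sSup_le
      intro B hB
      intro b hb
      obtain ⟨h1, h2⟩ := nil_centralizes_min mul hleib hNi hNn hB n hn b hb
      simp [h1, h2]
    have := hsoc hw
    simp only [Submodule.mem_inf, Submodule.mem_comap, Submodule.mem_bot,
      LinearMap.flip_apply] at this
    exact this
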